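/- Let s: ℝⁿ → ℝ be locally log-Hölder continuous with constant C_log(s), and let d ≥ C_log(s) and m > 0. Then there is a constant C such that for all x, y ∈ ℝⁿ and all v ∈ ℕ, 2^{v s(x)} η_{v,m+d}(x−y) ≤ C · 2^{v s(y)} η_{v,m}(x−y). Consequently, for every nonnegative measurable f, 2^{v s(x)} (η_{v,m+d} ∗ f)(x) ≤ C (η_{v,m} ∗ (2^{v s(·)} f))(x) for all x ∈ ℝⁿ. -/

import Mathlib

/-!
Write `r = |x - y|` and `L = log (e + 1/r)`. Since `2^v = (2^v r) (1/r) ≤ (1 + 2^v r)(e + 1/r)`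
and `L ≥ 1`, one gets `v log 2 ≤ L (1 + log (1 + 2^v r))`. Hence the log-Hölder bound
`s x - s y ≤ C_log / L` gives `2^{v (s x - s y)} ≤ e^{C_log} (1 + 2^v r)^{C_log}`, and the extra
decay `(1 + 2^v r)^{-d}` of `η_{v,m+d}` over `η_{v,m}` absorbs this factor.
-/

open MeasureTheory Real
open scoped ENNReal

noncomputable section

/-- The kernel `η_{v,m}(z) = 2^{vn}(1+2^v|z|)^{−m}`. -/
def eta {n : ℕ} (v : ℕ) (m : ℝ) (z : EuclideanSpace ℝ (Fin n)) : ℝ :=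
  (2 : ℝ) ^ (v * n) * (1 + (2 : ℝ) ^ v * ‖z‖) ^ (-m)

lemma one_le_log_exp_one_add {u : ℝ} (hu : 0 ≤ u) : 1 ≤ log (exp 1 + u) := by
  rw [le_log_iff_exp_le (by positivity)]
  linarith

lemma natCast_mul_log_two_le_log_add_log {r : ℝ} (hr : 0 < r) (v : ℕ) :
    (v : ℝ) * log 2 ≤ log (1 + 2 ^ v * r) + log (exp 1 + 1 / r) := by
  rw [← log_pow, ← log_mul (by positivity) (by positivity)]
  refine log_le_log (by positivity) ?_
  calc (2 : ℝ) ^ v = 2 ^ v * r * (1 / r) := by field_simp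
    _ ≤ (1 + 2 ^ v * r) * (exp 1 + 1 / r) := by gcongr <;> linarith [exp_pos 1]

lemma natCast_mul_log_two_le_mul {r : ℝ} (hr : 0 < r) (v : ℕ) :
    (v : ℝ) * log 2 ≤ log (exp 1 + 1 / r) * (1 + log (1 + 2 ^ v * r)) := by
  have hL := one_le_log_exp_one_add (one_div_pos.2 hr).le
  have ht : 0 ≤ log (1 + 2 ^ v * r) := 
    log_nonneg (le_add_of_nonneg_right (by positivity))
  nlinarith [natCast_mul_log_two_le_log_add_log hr v, mul_nonneg (sub_nonneg.2 hL) ht]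

lemma two_rpow_le_of_le_div_log {c d r δ : ℝ} (hc : 0 ≤ c) (hcd : c ≤ d) (hr : 0 < r)
    (hδ : δ ≤ c / log (exp 1 + 1 / r)) (v : ℕ) :
    (2 : ℝ) ^ ((v : ℝ) * δ) ≤ exp c * (1 + 2 ^ v * r) ^ d := by
  have hL : 0 < log (exp 1 + 1 / r) :=
    one_pos.trans_le (one_le_log_exp_one_add (one_div_pos.2 hr).le)
  have ht : 0 ≤ log (1 + 2 ^ v * r) := 
    log_nonneg (le_add_of_nonneg_right (by positivity))
  have hv : 0 ≤ (v : ℝ) * log 2 := by positivity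
  rw [rpow_def_of_pos two_pos, rpow_def_of_pos (by positivity), ← exp_add, exp_le_exp]
  calc log 2 * (v * δ) ≤ (v * log 2) * (c / log (exp 1 + 1 / r)) := by
        rw [← mul_assoc, mul_comm (log 2)]; gcongr
    _ = c * ((v * log 2) / log (exp 1 + 1 / r)) := by ring
    _ ≤ c * (1 + log (1 + 2 ^ v * r)) := by
        gcongr
        rw [div_le_iff₀ hL]
        exact (natCast_mul_log_two_le_mul hr v).trans_eq (mul_comm _ _)
    _ ≤ c + log (1 + 2 ^ v * r) * d := by nlinarith [mul_le_mul_of_nonneg_right hcd ht]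

lemma two_rpow_mul_rpow_neg_le_of_logHolder {E : Type*} [MetricSpace E] {s : E → ℝ} {c d : ℝ}
    (hc : 0 ≤ c) (hs : ∀ x y : E, x ≠ y → |s x - s y| ≤ c / log (exp 1 + 1 / dist x y))
    (hcd : c ≤ d) (x y : E) (v : ℕ) :
    (2 : ℝ) ^ ((v : ℝ) * s x) * (1 + 2 ^ v * dist x y) ^ (-d) ≤
      exp c * 2 ^ ((v : ℝ) * s y) := by
  rcases eq_or_ne x y with rfl | hxy
  · simpa using le_mul_of_one_le_left (by positivity) (one_le_exp hc)
  have hB : 0 < 1 + 2 ^ v * dist x y := by positivity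
  have key := two_rpow_le_of_le_div_log hc hcd (dist_pos.2 hxy)
    ((le_abs_self _).trans (hs x y hxy)) v
  rw [mul_sub, rpow_sub two_pos, div_le_iff₀ (by positivity)] at key
  rw [rpow_neg hB.le, ← div_eq_mul_inv, div_le_iff₀ (by positivity)]
  exact key.trans_eq (by ring)

lemma eta_add {n : ℕ} (v : ℕ) (m d : ℝ) (z : EuclideanSpace ℝ (Fin n)) :
    eta v (m + d) z = eta v m z * (1 + 2 ^ v * ‖z‖) ^ (-d) := by
  rw [eta, eta, neg_add, rpow_add (by positivity)]
  ring

lemma two_rpow_mul_eta_le_of_logHolder {n : ℕ} {s : EuclideanSpace ℝ (Fin n) → ℝ}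
    {c d : ℝ} (hc : 0 ≤ c) (hs : ∀ x y : EuclideanSpace ℝ (Fin n), x ≠ y →
      |s x - s y| ≤ c / log (exp 1 + 1 / dist x y))
    (hcd : c ≤ d) (m : ℝ) (x y : EuclideanSpace ℝ (Fin n)) (v : ℕ) :
    (2 : ℝ) ^ ((v : ℝ) * s x) * eta v (m + d) (x - y) ≤
      exp c * 2 ^ ((v : ℝ) * s y) * eta v m (x - y) := by
  have h := two_rpow_mul_rpow_neg_le_of_logHolder hc hs hcd x y v
  rw [dist_eq_norm] at h
  have : 0 ≤ eta v m (x - y) := by unfold eta; positivity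
  rw [eta_add, mul_comm (eta v m _), ← mul_assoc]
  gcongr

lemma ofReal_mul_lintegral_le {α : Type*} [MeasurableSpace α] {μ : Measure α} {a C : ℝ}
    {k k' w : α → ℝ} (ha : 0 ≤ a) (hC : 0 ≤ C) (hw : ∀ y, 0 ≤ w y)
    (h : ∀ y, a * k y ≤ C * w y * k' y) (f : α → ℝ≥0∞) :
    ENNReal.ofReal a * ∫⁻ y, ENNReal.ofReal (k y) * f y ∂μ ≤
      ENNReal.ofReal C * ∫⁻ y, ENNReal.ofReal (k' y) * (ENNReal.ofReal (w y) * f y) ∂μ := by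
  rw [← lintegral_const_mul' _ _ ENNReal.ofReal_ne_top,
    ← lintegral_const_mul' _ _ ENNReal.ofReal_ne_top]
  refine lintegral_mono fun y => ?_
  have hy : ENNReal.ofReal a * ENNReal.ofReal (k y) ≤
      ENNReal.ofReal C * ENNReal.ofReal (w y) * ENNReal.ofReal (k' y) := by
    rw [← ENNReal.ofReal_mul ha, ← ENNReal.ofReal_mul hC,
      ← ENNReal.ofReal_mul (mul_nonneg hC (hw y))]
    exact ENNReal.ofReal_le_ofReal (h y)
  calc _ = ENNReal.ofReal a * ENNReal.ofReal (k y) * f y := (mul_assoc _ _ _).symm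
    _ ≤ ENNReal.ofReal C * ENNReal.ofReal (w y) * ENNReal.ofReal (k' y) * f y := by gcongr
    _ = _ := by ring

theorem eta_logHolder_weight_swap_general {n : ℕ}
    (s : EuclideanSpace ℝ (Fin n) → ℝ)
    (Clog : ℝ) (hClog : 0 < Clog)
    (hs_log : ∀ x y : EuclideanSpace ℝ (Fin n), x ≠ y →
      |s x - s y| ≤ Clog / Real.log (Real.exp 1 + 1 / dist x y))
    (d m : ℝ) (hd : Clog ≤ d) :
    ∃ C : ℝ, 0 < C ∧
      (∀ (x y : EuclideanSpace ℝ (Fin n)) (v : ℕ), 1 ≤ v →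
        (2 : ℝ) ^ ((v : ℝ) * s x) * eta v (m + d) (x - y)
          ≤ C * (2 : ℝ) ^ ((v : ℝ) * s y) * eta v m (x - y)) ∧
      (∀ (f : EuclideanSpace ℝ (Fin n) → ℝ≥0∞), Measurable f →
        ∀ (x : EuclideanSpace ℝ (Fin n)) (v : ℕ), 1 ≤ v →
          ENNReal.ofReal ((2 : ℝ) ^ ((v : ℝ) * s x)) *
              ∫⁻ y, ENNReal.ofReal (eta v (m + d) (x - y)) * f y
            ≤ ENNReal.ofReal C *
              ∫⁻ y, ENNReal.ofReal (eta v m (x - y)) *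
                (ENNReal.ofReal ((2 : ℝ) ^ ((v : ℝ) * s y)) * f y)) := by
  have hpt := two_rpow_mul_eta_le_of_logHolder hClog.le hs_log hd m
  refine ⟨exp Clog, exp_pos _, fun x y v _ => hpt x y v, fun f _ x v _ => ?_⟩
  exact ofReal_mul_lintegral_le (by positivity) (exp_pos _).le (fun y => by positivity)
    (fun y => hpt x y v) f

/-- Let `s : ℝⁿ → ℝ` be bounded and locally log-Hölder continuous
with constant `C_log(s)`, `d ≥ C_log(s)` and `m > 0`. Then there is `C > 0` such
that for all `x, y ∈ ℝⁿ` and `v ∈ ℕ`,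
`2^{vs(x)} η_{v,m+d}(x−y) ≤ C 2^{vs(y)} η_{v,m}(x−y)`; consequently, for every
nonnegative measurable `f`,
`2^{vs(x)} (η_{v,m+d} ∗ f)(x) ≤ C (η_{v,m} ∗ (2^{vs(·)} f))(x)`. -/
theorem eta_logHolder_weight_swap {n : ℕ}
    (s : EuclideanSpace ℝ (Fin n) → ℝ) (hs_bdd : ∃ M : ℝ, ∀ x, |s x| ≤ M)
    (Clog : ℝ) (hClog : 0 < Clog)
    (hs_log : ∀ x y : EuclideanSpace ℝ (Fin n), x ≠ y →
      |s x - s y| ≤ Clog / Real.log (Real.exp 1 + 1 / dist x y))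
    (d m : ℝ) (hd : Clog ≤ d) (hm : 0 < m) :
    ∃ C : ℝ, 0 < C ∧
      (∀ (x y : EuclideanSpace ℝ (Fin n)) (v : ℕ), 1 ≤ v →
        (2 : ℝ) ^ ((v : ℝ) * s x) * eta v (m + d) (x - y)
          ≤ C * (2 : ℝ) ^ ((v : ℝ) * s y) * eta v m (x - y)) ∧
      (∀ (f : EuclideanSpace ℝ (Fin n) → ℝ≥0∞), Measurable f →
        ∀ (x : EuclideanSpace ℝ (Fin n)) (v : ℕ), 1 ≤ v →
          ENNReal.ofReal ((2 : ℝ) ^ ((v : ℝ) * s x)) *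
              ∫⁻ y, ENNReal.ofReal (eta v (m + d) (x - y)) * f y
            ≤ ENNReal.ofReal C *
              ∫⁻ y, ENNReal.ofReal (eta v m (x - y)) *
                (ENNReal.ofReal ((2 : ℝ) ^ ((v : ℝ) * s y)) * f y)) :=
  eta_logHolder_weight_swap_general s Clog hClog hs_log d m hd
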